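/- If G is a graph in which every vertex neighborhood induces a bipartite graph, then in the edge-clique graph K_e(G) every vertex neighborhood induces a graph of maximum degree at most 1 (i.e., a matching, possibly empty). -/

import Mathlib

/-!
Bipartite neighbourhoods contain no triangle, so `G` has no `K₄`. If `e, f, g` are pairwise
adjacent in `K_e(G)`, their endpoints span a clique, hence at most three vertices; since `e ≠ f`,
these are exactly the vertices `a, b, c` of the triangle spanned by `e` and `f`. So an edge adjacent
to both `e` and `f` is an edge of the triangle `abc` other than `e` and `f`: the third one.
-/

open SimpleGraph

/-- The edge-clique graph `K_e(G)`: vertices are the edges of `G`, two edges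
being adjacent iff their endpoints together span a clique of `G`. -/
def Ke {V : Type*} (G : SimpleGraph V) : SimpleGraph G.edgeSet where
  Adj e f := e ≠ f ∧ G.IsClique {x | x ∈ e.1 ∨ x ∈ f.1}
  symm := by
    constructor
    rintro e f ⟨hne, hc⟩
    refine ⟨hne.symm, ?_⟩
    have h : {x | x ∈ f.1 ∨ x ∈ e.1} = {x | x ∈ e.1 ∨ x ∈ f.1} := by
      ext x; exact or_comm
    rw [h]; exact hc
  loopless := ⟨fun e h => h.1 rfl⟩

namespace Sym2

variable {α : Type*} {a b c : α} {z : Sym2 α}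

theorem exists_mem_ne_ne_of_ne (hz : ¬z.IsDiag) (hne : z ≠ s(a, b)) :
    ∃ c ∈ z, c ≠ a ∧ c ≠ b := by
  induction z using Sym2.ind with
  | _ x y =>
  by_contra h
  have hxy : x ≠ y := hz
  have hmem : ∀ c ∈ s(x, y), c = a ∨ c = b := fun c hc ↦ by
    by_contra! hc'
    exact h ⟨c, hc, hc'⟩
  rcases hmem x (mem_mk_left x y) with rfl | rfl <;>
    rcases hmem y (mem_mk_right x y) with rfl | rfl <;> simp_all [eq_swap]

theorem eq_or_eq_or_eq_of_coe_subset_triple (hz : ¬z.IsDiag) (hsub : (z : Set α) ⊆ {a, b, c}) :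
    z = s(a, b) ∨ z = s(a, c) ∨ z = s(b, c) := by
  induction z using Sym2.ind with
  | _ x y =>
  have hxy : x ≠ y := hz
  rw [coe_mk, Set.insert_subset_iff, Set.singleton_subset_iff] at hsub
  obtain ⟨hx, hy⟩ := hsub
  simp only [Set.mem_insert_iff, Set.mem_singleton_iff] at hx hy
  rcases hx with rfl | rfl | rfl <;> rcases hy with rfl | rfl | rfl <;> simp_all [eq_swap]

end Sym2

namespace SimpleGraph

variable {V : Type*} {G : SimpleGraph V}

theorem cliqueFree_succ_of_cliqueFree_induce_neighborSet {n : ℕ}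
    (h : ∀ v, (G.induce (G.neighborSet v)).CliqueFree n) : G.CliqueFree (n + 1) := by
  classical
  intro t ht
  obtain ⟨v, hv⟩ : t.Nonempty := Finset.card_pos.1 (by rw [ht.card_eq]; omega)
  refine (G.cliqueFree_induce_iff _ _).1 (h v) (fun w hw ↦ ?_) (ht.erase_of_mem hv)
  obtain ⟨hwv, hw⟩ := Finset.mem_erase.1 hw
  exact ht.isClique hv hw hwv.symm

theorem IsClique.union_union {s t u : Set V} (hst : G.IsClique (s ∪ t))
    (hsu : G.IsClique (s ∪ u)) (htu : G.IsClique (t ∪ u)) : G.IsClique (s ∪ t ∪ u) := by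
  have := G.symm
  rw [IsClique, Set.pairwise_union_of_symm]
  exact ⟨hst, htu.subset Set.subset_union_right, fun x hx y hy hxy ↦
    hx.elim (fun hx ↦ hsu (.inl hx) (.inr hy) hxy) fun hx ↦ htu (.inl hx) (.inr hy) hxy⟩

theorem IsClique.subset_triple_of_cliqueFree_four (h4 : G.CliqueFree 4) {s : Set V}
    (hs : G.IsClique s) {a b c : V} (ha : a ∈ s) (hb : b ∈ s) (hc : c ∈ s)
    (hab : a ≠ b) (hac : a ≠ c) (hbc : b ≠ c) : s ⊆ {a, b, c} := by
  classical
  intro x hx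
  by_contra hxabc
  simp only [Set.mem_insert_iff, Set.mem_singleton_iff, not_or] at hxabc
  obtain ⟨hxa, hxb, hxc⟩ := hxabc
  have habc : G.IsNClique 3 {a, b, c} :=
    is3Clique_triple_iff.2 ⟨hs ha hb hab, hs ha hc hac, hs hb hc hbc⟩
  refine h4 _ (habc.insert (a := x) ?_)
  simp only [Finset.mem_insert, Finset.mem_singleton]
  rintro y (rfl | rfl | rfl)
  · exact hs hx ha hxa
  · exact hs hx hb hxb
  · exact hs hx hc hxc

end SimpleGraph

section

variable {V : Type*} {G : SimpleGraph V}

theorem Ke_adj_iff {e f : G.edgeSet} :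
    (Ke G).Adj e f ↔ e ≠ f ∧ G.IsClique ((e.1 : Set V) ∪ f.1) :=
  Iff.rfl

theorem eq_of_Ke_adj_of_cliqueFree_four (h4 : G.CliqueFree 4) {e f g h : G.edgeSet}
    (hef : (Ke G).Adj e f) (heg : (Ke G).Adj e g) (heh : (Ke G).Adj e h)
    (hfg : (Ke G).Adj f g) (hfh : (Ke G).Adj f h) : g = h := by
  obtain ⟨⟨a, b⟩, he⟩ := e
  rw [Ke_adj_iff] at hef heg heh hfg hfh
  have hab : a ≠ b := G.ne_of_adj he
  obtain ⟨c, hcf, hca, hcb⟩ := Sym2.exists_mem_ne_ne_of_ne (G.not_isDiag_of_mem_edgeSet f.2)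
    fun hfe ↦ hef.1 (Subtype.ext hfe.symm)
  have hspan {s : Set V} (hs : G.IsClique s) (hsub : (s(a, b) : Set V) ∪ f.1 ⊆ s) :
      s ⊆ {a, b, c} :=
    hs.subset_triple_of_cliqueFree_four h4 (hsub (by simp)) (hsub (by simp)) (hsub (.inr hcf))
      hab hca.symm hcb.symm
  have hfabc := hspan hef.2 subset_rfl
  have hgabc := hspan (hef.2.union_union heg.2 hfg.2) Set.subset_union_left
  have hhabc := hspan (hef.2.union_union heh.2 hfh.2) Set.subset_union_left
  have hthird {z : G.edgeSet} (hz : (z.1 : Set V) ⊆ {a, b, c}) :=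
    Sym2.eq_or_eq_or_eq_of_coe_subset_triple (G.not_isDiag_of_mem_edgeSet z.2) hz
  rcases hthird (Set.union_subset_iff.1 hfabc).2 with hf | hf | hf <;>
    rcases hthird (Set.union_subset_iff.1 hgabc).2 with hg | hg | hg <;>
    rcases hthird (Set.union_subset_iff.1 hhabc).2 with hh | hh | hh <;>
    simp_all [Subtype.ext_iff]

end

/-- If every vertex neighborhood of `G` induces a bipartite graph, then every
vertex neighborhood in `K_e(G)` induces a graph of maximum degree at most `1`:
if `f, g, h` are all neighbors of `e` and `f` is adjacent to both `g` and `h`,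
then `g = h`. -/
theorem Ke_neighborhood_matching {V : Type*} (G : SimpleGraph V)
    (hbip : ∀ v : V, (G.induce (G.neighborSet v)).Colorable 2) :
    ∀ e f g h : G.edgeSet, (Ke G).Adj e f → (Ke G).Adj e g → (Ke G).Adj e h →
      (Ke G).Adj f g → (Ke G).Adj f h → g = h := by
  have h4 : G.CliqueFree 4 :=
    cliqueFree_succ_of_cliqueFree_induce_neighborSet fun v ↦ (hbip v).cliqueFree (by norm_num)
  exact fun _ _ _ _ ↦ eq_of_Ke_adj_of_cliqueFree_four h4
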